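/- Let R be a PVMD and I a t-invertible ideal of R. Then (I·T(I))_{t₁} = T(I), where t₁ is the t-operation of the Nagata transform T(I). -/

import Mathlib

/-!
Common definitions: star operations (`v`- and `t`-closure), `t`-ideals, `t`-invertibility,
PVMDs, overrings, `t`-linked and `t`-flat overrings, localizations inside the quotient
field, Nagata and Kaplansky transforms, endomorphism rings of ideals.
-/

open scoped Classical

namespace PVMDPaper

noncomputable section

section Generic

variable (A : Type*) [CommRing A] (K : Type*) [Field K] [Algebra A K]

/-- The image of an integral ideal of `A` inside the field `K`, as an `A`-submodule of `K`. -/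
def toK (I : Ideal A) : Submodule A K := Submodule.map (Algebra.linearMap A K) I

variable {A K}

/-- The dual `I⁻¹ = (A : I) = {x ∈ K : x I ⊆ A}` of a submodule of `K`. -/
def dual (I : Submodule A K) : Submodule A K := 1 / I

/-- The `v`-closure `I_v = (I⁻¹)⁻¹`. -/
def vOp (I : Submodule A K) : Submodule A K := 1 / (1 / I)

/-- The `t`-closure `I_t`: the union of `J_v` where `J` ranges over the nonzero finitely
generated submodules `J ≤ I` (the union of this directed family is its supremum). -/
def tOp (I : Submodule A K) : Submodule A K :=
  sSup {V | ∃ J : Submodule A K, J ≠ ⊥ ∧ J.FG ∧ J ≤ I ∧ V = vOp J}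

variable (K)

/-- An (integral) ideal `I` of `A` is a `t`-ideal if `I = I_t`. -/
def IsTIdeal (I : Ideal A) : Prop := tOp (toK A K I) = toK A K I

/-- An ideal `I` is `t`-invertible if `(I I⁻¹)_t = A`. -/
def IsTInvertible (I : Ideal A) : Prop := tOp (toK A K I * dual (toK A K I)) = 1

/-- A `t`-maximal ideal: an ideal maximal in the set of proper integral `t`-ideals. -/
def IsTMaximal (M : Ideal A) : Prop :=
  M ≠ ⊤ ∧ IsTIdeal K M ∧ ∀ J : Ideal A, J ≠ ⊤ → IsTIdeal K J → M ≤ J → J = M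

variable (A)

/-- `A` is a Prüfer `v`-multiplication domain: every nonzero finitely generated ideal
is `t`-invertible. -/
def IsPVMD : Prop := ∀ I : Ideal A, I ≠ ⊥ → I.FG → IsTInvertible K I

/-- `Spec_t(A)` is Noetherian: the ascending chain condition on radical `t`-ideals. -/
def TSpecNoetherian : Prop :=
  ∀ f : ℕ →o Ideal A, (∀ n, IsTIdeal K (f n) ∧ (f n).radical = f n) →
    ∃ n, ∀ m, n ≤ m → f m = f n

variable {A K}

/-- A submodule of `K` is a subring of `K` iff it contains `1` and is closed under
multiplication (being an additive subgroup already). -/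
def IsSubringOf (S : Submodule A K) : Prop :=
  (1 : K) ∈ S ∧ ∀ x ∈ S, ∀ y ∈ S, x * y ∈ S

variable (K)

/-- The localization `A_P = {a/s : a ∈ A, s ∈ A ∖ P}` viewed as a subset of `K`. -/
def loc (P : Ideal A) : Set K :=
  {x | ∃ a s : A, s ∉ P ∧ x * algebraMap A K s = algebraMap A K a}

/-- The set `J A_P = {a/s : a ∈ J, s ∈ A ∖ P} ⊆ K`. -/
def locIdealAt (J P : Ideal A) : Set K :=
  {x | ∃ a ∈ J, ∃ s : A, s ∉ P ∧ x * algebraMap A K s = algebraMap A K a}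

/-- `Z(A, I)`: the set of zero divisors on `A/I`. -/
def ZSet (I : Ideal A) : Set A := {x | ∃ a : A, a ∉ I ∧ x * a ∈ I}

/-- `Q` is a maximal prime ideal of `Z(A,I)`: a prime contained in `Z(A,I)`, maximal
(under inclusion) among the primes contained in `Z(A,I)`. -/
def MaxPrimeOfZ (I Q : Ideal A) : Prop :=
  Q.IsPrime ∧ (Q : Set A) ⊆ ZSet I ∧
    ∀ Q' : Ideal A, Q'.IsPrime → (Q' : Set A) ⊆ ZSet I → Q ≤ Q' → Q' = Q

end Generic

section Overring

variable {R : Type*} [CommRing R] [IsDomain R]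
variable {K : Type*} [Field K] [Algebra R K] [IsFractionRing R K]

/-- The extension `IT` of an ideal `I` of `R` to an overring `T`, as a `T`-submodule of `K`. -/
def extendI (I : Ideal R) (T : Subalgebra R K) : Submodule T K :=
  Submodule.span T (algebraMap R K '' (I : Set R))

/-- The extension `IT` of an `R`-submodule `I` of `K` to an overring `T`. -/
def extendS (I : Submodule R K) (T : Subalgebra R K) : Submodule T K :=
  Submodule.span T (I : Set K)

/-- An overring `T` of `R` is `t`-linked over `R` if `(IT)⁻¹ = T` for each finitely
generated ideal `I` of `R` with `I⁻¹ = R`. -/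
def IsTLinked (T : Subalgebra R K) : Prop :=
  ∀ I : Ideal R, I.FG → dual (toK R K I) = 1 → dual (extendI I T) = 1

/-- An overring `T` of `R` is `t`-flat over `R` if `T_M = R_{M ∩ R}` for each
`t`-maximal ideal `M` of `T`. -/
def IsTFlat (T : Subalgebra R K) : Prop :=
  ∀ M : Ideal T, IsTMaximal K M → loc K M = loc K (M.comap (algebraMap R T))

variable (R K)

/-- `R` is a `tQR`-domain: a PVMD all of whose `t`-linked overrings are localizations
of `R` at multiplicative sets. -/
def IsTQR : Prop :=
  IsPVMD R K ∧ ∀ T : Subalgebra R K, IsTLinked T → ∃ S : Submonoid R,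
    (T : Set K) = {x | ∃ a : R, ∃ s ∈ S, x * algebraMap R K s = algebraMap R K a}

variable {R K}
variable (K)

/-- The endomorphism ring `(I : I) = {x ∈ K : x I ⊆ I}` of an ideal `I`, as an
overring of `R`. -/
def endoRing (I : Ideal R) : Subalgebra R K where
  carrier := {x : K | ∀ y ∈ toK R K I, x * y ∈ toK R K I}
  mul_mem' := by
    intro a b ha hb y hy
    rw [mul_assoc]
    exact ha _ (hb _ hy)
  one_mem' := by
    intro y hy
    rwa [one_mul]
  add_mem' := by
    intro a b ha hb y hy
    rw [add_mul]
    exact Submodule.add_mem _ (ha y hy) (hb y hy)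
  zero_mem' := by
    intro y hy
    rw [zero_mul]
    exact Submodule.zero_mem _
  algebraMap_mem' := by
    intro r y hy
    rw [← Algebra.smul_def]
    exact Submodule.smul_mem _ r hy

set_option synthInstance.maxHeartbeats 400000 in
/-- The ideal `I`, viewed as an ideal of its endomorphism ring `(I : I)`. -/
def idealInEndo (I : Ideal R) : Ideal (endoRing K I) where
  carrier := {x | (x : K) ∈ toK R K I}
  add_mem' := by
    intro a b ha hb
    simp only [Set.mem_setOf_eq] at *
    rw [AddMemClass.coe_add]
    exact Submodule.add_mem _ ha hb
  zero_mem' := by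
    simp only [Set.mem_setOf_eq, ZeroMemClass.coe_zero]
    exact Submodule.zero_mem _
  smul_mem' := by
    intro c x hx
    simp only [Set.mem_setOf_eq] at *
    rw [smul_eq_mul, MulMemClass.coe_mul]
    exact c.2 _ hx

/-- The Kaplansky transform `Ω(I) = {u ∈ K : ∀ a ∈ I, ∃ n ≥ 1, u aⁿ ∈ R}`, as an
overring of `R`. -/
def kaplansky (I : Ideal R) : Subalgebra R K where
  carrier := {u : K | ∀ a ∈ I, ∃ n : ℕ, 0 < n ∧
    ∃ r : R, u * (algebraMap R K a) ^ n = algebraMap R K r}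
  mul_mem' := by
    intro u v hu hv a ha
    obtain ⟨n, hn, r, hr⟩ := hu a ha
    obtain ⟨m, hm, s, hs⟩ := hv a ha
    refine ⟨n + m, by omega, r * s, ?_⟩
    rw [map_mul, ← hr, ← hs, pow_add]
    ring
  one_mem' := by
    intro a ha
    exact ⟨1, one_pos, a, by rw [pow_one, one_mul]⟩
  add_mem' := by
    intro u v hu hv a ha
    obtain ⟨n, hn, r, hr⟩ := hu a ha
    obtain ⟨m, hm, s, hs⟩ := hv a ha
    refine ⟨n + m, by omega, r * a ^ m + s * a ^ n, ?_⟩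
    rw [map_add, map_mul, map_mul, map_pow, map_pow, ← hr, ← hs, pow_add, add_mul]
    ring
  zero_mem' := by
    intro a ha
    exact ⟨1, one_pos, 0, by rw [map_zero, zero_mul]⟩
  algebraMap_mem' := by
    intro r a ha
    exact ⟨1, one_pos, r * a, by rw [map_mul, pow_one]⟩

/-- The Nagata (ideal) transform `T(I) = ⋃_{n ≥ 1} (R : Iⁿ)`, as an overring of `R`. -/
def nagata (I : Ideal R) : Subalgebra R K where
  carrier := {x : K | ∃ n : ℕ, ∀ y ∈ I ^ (n + 1),
    ∃ r : R, x * algebraMap R K y = algebraMap R K r}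
  mul_mem' := by
    intro x x' hx hx'
    obtain ⟨n, hn⟩ := hx
    obtain ⟨m, hm⟩ := hx'
    refine ⟨n + m + 1, fun y hy => ?_⟩
    rw [show n + m + 1 + 1 = (n + 1) + (m + 1) by omega, pow_add] at hy
    refine Submodule.mul_induction_on hy ?_ ?_
    · intro a ha b hb
      obtain ⟨r, hr⟩ := hn a ha
      obtain ⟨s, hs⟩ := hm b hb
      refine ⟨r * s, ?_⟩
      rw [map_mul, map_mul, ← hr, ← hs]
      ring
    · rintro y1 y2 ⟨r1, h1⟩ ⟨r2, h2⟩
      exact ⟨r1 + r2, by rw [map_add, map_add, mul_add, h1, h2]⟩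
  one_mem' := ⟨0, fun y _ => ⟨y, by rw [one_mul]⟩⟩
  add_mem' := by
    intro x x' hx hx'
    obtain ⟨n, hn⟩ := hx
    obtain ⟨m, hm⟩ := hx'
    refine ⟨n + m + 1, fun y hy => ?_⟩
    have h1 : y ∈ I ^ (n + 1) := Ideal.pow_le_pow_right (by omega) hy
    have h2 : y ∈ I ^ (m + 1) := Ideal.pow_le_pow_right (by omega) hy
    obtain ⟨r, hr⟩ := hn y h1
    obtain ⟨s, hs⟩ := hm y h2
    exact ⟨r + s, by rw [map_add, add_mul, hr, hs]⟩
  zero_mem' := ⟨0, fun y _ => ⟨0, by rw [map_zero, zero_mul]⟩⟩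
  algebraMap_mem' := by
    intro r
    exact ⟨0, fun y _ => ⟨r * y, by rw [map_mul]⟩⟩

end Overring

/-!
Since `I` is `t`-invertible, `I⁻¹ = F⁻¹` for a finite nonzero `F ⊆ I`. In `T = T(I)` the
extension `FT` has `(T : FT) = T`: if `x F ⊆ T` then `x Iⁿ F ⊆ R` for large `n`, so
`x Iⁿ ⊆ F⁻¹ = I⁻¹` and `x Iⁿ⁺¹ ⊆ R`, i.e. `x ∈ T`. Hence `(FT)_v = T`, and as
`FT ⊆ IT ⊆ T` this gives `(IT)_{t₁} = T`.
-/

lemma exists_finset_subset_le_span_mul {A B : Type*} [CommSemiring A] [Semiring B]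
    [Algebra A B] {J P Q : Submodule A B} (hJ : J.FG) (hle : J ≤ P * Q) :
    ∃ s : Finset B, (s : Set B) ⊆ P ∧ J ≤ Submodule.span A (s : Set B) * Q := by
  classical
  obtain ⟨t, rfl⟩ := hJ
  have hfin : ∀ x ∈ t, ∃ s : Finset B,
      (s : Set B) ⊆ P ∧ x ∈ Submodule.span A (s : Set B) * Q := by
    intro x hx
    obtain ⟨s, s', hs, hs', hxs⟩ :=
      Submodule.mem_span_mul_finite_of_mem_mul (hle (Submodule.subset_span hx))
    rw [← Submodule.span_mul_span] at hxs
    exact ⟨s, hs, mul_le_mul_right (Submodule.span_le.mpr hs') _ hxs⟩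
  choose! f hfP hfx using hfin
  refine ⟨t.biUnion f, by simpa using hfP, Submodule.span_le.mpr fun x hx => ?_⟩
  refine mul_le_mul_left (Submodule.span_mono ?_) _ (hfx x hx)
  exact Finset.coe_subset.mpr (Finset.subset_biUnion_of_mem f hx)

section DivisorialAlgebra

variable {A B : Type*} [CommSemiring A] [CommSemiring B] [Algebra A B]

lemma one_div_antitone : Antitone fun M : Submodule A B => 1 / M := fun _ _ h =>
  Submodule.le_div_iff.mpr fun _ hx _ hz => hx _ (h hz)

lemma one_div_mul_le_one (M : Submodule A B) : 1 / M * M ≤ 1 := by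
  rw [mul_comm]
  exact Submodule.mul_one_div_le_one

lemma one_div_le_one_div_of_le_mul {F M J : Submodule A B} (hJ : 1 / J ≤ 1)
    (hle : J ≤ F * (1 / M)) : 1 / F ≤ 1 / M := by
  rw [Submodule.le_div_iff_mul_le]
  refine le_trans (Submodule.le_div_iff_mul_le.mpr ?_) hJ
  calc 1 / F * M * J ≤ 1 / F * M * (F * (1 / M)) := mul_le_mul_right hle _
    _ = 1 / F * F * (M * (1 / M)) := by ring
    _ ≤ 1 * 1 := mul_le_mul' (one_div_mul_le_one F) Submodule.mul_one_div_le_one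
    _ = 1 := mul_one 1

end DivisorialAlgebra

section Closures

variable {A : Type*} [CommRing A] {K : Type*} [Field K] [Algebra A K]

lemma vOp_mono {M N : Submodule A K} (h : M ≤ N) : vOp M ≤ vOp N :=
  one_div_antitone (one_div_antitone h)

lemma one_le_vOp_iff {M : Submodule A K} : 1 ≤ vOp M ↔ 1 / M ≤ 1 := by
  rw [vOp, Submodule.le_div_iff_mul_le, one_mul]

lemma vOp_le_one {M : Submodule A K} (h : M ≤ 1) : vOp M ≤ 1 := by
  have h1 : 1 ≤ 1 / M := Submodule.one_le_one_div.mpr h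
  calc vOp M ≤ 1 / 1 := one_div_antitone h1
    _ ≤ 1 := by simpa using one_div_mul_le_one (1 : Submodule A K)

lemma tOp_le_one {M : Submodule A K} (h : M ≤ 1) : tOp M ≤ 1 :=
  sSup_le fun _ ⟨_, _, _, hJ, hV⟩ => hV ▸ vOp_le_one (hJ.trans h)

lemma one_le_tOp {M J : Submodule A K} (hJ : J ≠ ⊥) (hfg : J.FG) (hle : J ≤ M)
    (h : 1 ≤ vOp J) : 1 ≤ tOp M :=
  h.trans (le_sSup ⟨J, hJ, hfg, hle, rfl⟩)

lemma exists_fg_of_mem_tOp {M : Submodule A K} {x : K} (hx : x ≠ 0) (h : x ∈ tOp M) :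
    ∃ J : Submodule A K, J ≠ ⊥ ∧ J.FG ∧ J ≤ M ∧ x ∈ vOp J := by
  rw [tOp] at h
  set S := {V | ∃ J : Submodule A K, J ≠ ⊥ ∧ J.FG ∧ J ≤ M ∧ V = vOp J}
  have hS : S.Nonempty :=
    Set.nonempty_iff_ne_empty.mpr fun hempty => hx (by simpa [hempty] using h)
  have hdir : DirectedOn (· ≤ ·) S := by
    rintro _ ⟨J₁, hJ₁, hfg₁, hle₁, rfl⟩ _ ⟨J₂, -, hfg₂, hle₂, rfl⟩
    refine ⟨vOp (J₁ ⊔ J₂),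
      ⟨J₁ ⊔ J₂, ?_, hfg₁.sup hfg₂, sup_le hle₁ hle₂, rfl⟩, vOp_mono le_sup_left,
      vOp_mono le_sup_right⟩
    exact fun hbot => hJ₁ (le_bot_iff.mp (hbot ▸ le_sup_left))
  obtain ⟨_, ⟨J, hJ, hfg, hle, rfl⟩, hxJ⟩ :=
    (Submodule.mem_sSup_of_directed hS hdir).mp h
  exact ⟨J, hJ, hfg, hle, hxJ⟩

lemma exists_finset_one_div_le_dual {M : Submodule A K} (h : tOp (M * dual M) = 1) :
    ∃ s : Finset K, (s : Set K) ⊆ M ∧ Submodule.span A (s : Set K) ≠ ⊥ ∧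
      1 / Submodule.span A (s : Set K) ≤ dual M := by
  have h1 : (1 : K) ∈ tOp (M * dual M) := h ▸ Submodule.one_le.mp le_rfl
  obtain ⟨J, hJ, hfg, hle, hJ1⟩ := exists_fg_of_mem_tOp one_ne_zero h1
  obtain ⟨s, hsM, hJs⟩ := exists_finset_subset_le_span_mul hfg hle
  refine ⟨s, hsM, fun hs => hJ (le_bot_iff.mp ?_), ?_⟩
  · simpa [hs] using hJs
  · exact one_div_le_one_div_of_le_mul (one_le_vOp_iff.mp (Submodule.one_le.mpr hJ1)) hJs

end Closures

lemma Subalgebra.mem_one_submodule_iff {A K : Type*} [CommSemiring A] [CommSemiring K]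
    [Algebra A K] (T : Subalgebra A K) {x : K} : x ∈ (1 : Submodule T K) ↔ x ∈ T := by
  rw [Submodule.mem_one]
  exact ⟨fun ⟨y, hy⟩ => hy ▸ y.2, fun hx => ⟨⟨x, hx⟩, rfl⟩⟩

section NagataTransform

variable {R : Type*} [CommRing R] {K : Type*} [Field K] [Algebra R K]

lemma coe_toK (I : Ideal R) : (toK R K I : Set K) = algebraMap R K '' I :=
  Submodule.map_coe _ _

lemma toK_pow (I : Ideal R) (n : ℕ) : toK R K (I ^ n) = toK R K I ^ n :=
  Submodule.map_pow _ (Algebra.ofId R K) n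

lemma toK_le_one (I : Ideal R) : toK R K I ≤ 1 := by
  rintro _ ⟨r, -, rfl⟩
  exact Submodule.mem_one.mpr ⟨r, rfl⟩

lemma mem_nagata_iff {I : Ideal R} {x : K} :
    x ∈ nagata K I ↔ ∃ n, x ∈ dual (toK R K I ^ (n + 1)) := by
  simp only [dual, ← toK_pow]
  refine exists_congr fun n => ⟨fun h _ ⟨y, hy, hxy⟩ => ?_, fun h y hy => ?_⟩
  · obtain ⟨r, hr⟩ := h y hy
    exact Submodule.mem_one.mpr ⟨r, by rw [← hxy, ← hr]; rfl⟩
  · obtain ⟨r, hr⟩ := Submodule.mem_one.mp (h _ ⟨y, hy, rfl⟩)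
    exact ⟨r, hr.symm⟩

lemma dual_toK_pow_monotone (I : Ideal R) :
    Monotone fun n => dual (toK R K I ^ (n + 1)) := fun _ _ h =>
  one_div_antitone (pow_le_pow_right_of_le_one' (toK_le_one I) (Nat.add_le_add_right h 1))

lemma mem_nagata_of_forall_mul_mem {I : Ideal R} {s : Finset K}
    (hs : 1 / Submodule.span R (s : Set K) ≤ dual (toK R K I)) {x : K}
    (hx : ∀ z ∈ s, x * z ∈ nagata K I) : x ∈ nagata K I := by
  choose! e he using fun z hz => mem_nagata_iff.mp (hx z hz)
  set N := s.sup e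
  set X := Submodule.span R {x}
  set M := toK R K I
  have hXs : X * Submodule.span R s ≤ dual (M ^ (N + 1)) := by
    rw [Submodule.span_mul_span, Submodule.span_le, Set.singleton_mul]
    rintro _ ⟨z, hz, rfl⟩
    exact dual_toK_pow_monotone I (Finset.le_sup hz) (he z hz)
  have hXM : X * M ^ (N + 1) ≤ dual M := by
    refine le_trans (Submodule.le_div_iff_mul_le.mpr ?_) hs
    rw [mul_right_comm]
    exact Submodule.le_div_iff_mul_le.mp hXs
  refine mem_nagata_iff.mpr ⟨N + 1, ?_⟩
  rw [← Submodule.span_singleton_le_iff_mem, dual, Submodule.le_div_iff_mul_le, pow_succ,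
    ← mul_assoc]
  exact Submodule.le_div_iff_mul_le.mp hXM

lemma one_div_span_le_one_of_one_div_le_dual {I : Ideal R} {s : Finset K}
    (hs : 1 / Submodule.span R (s : Set K) ≤ dual (toK R K I)) :
    (1 : Submodule (nagata K I) K) / Submodule.span (nagata K I) (s : Set K) ≤ 1 := by
  intro x hx
  rw [Subalgebra.mem_one_submodule_iff]
  refine mem_nagata_of_forall_mul_mem hs fun z hz => ?_
  rw [← Subalgebra.mem_one_submodule_iff]
  exact Submodule.mem_div_iff_forall_mul_mem.mp hx z (Submodule.subset_span hz)

lemma extendI_le_one (I : Ideal R) (T : Subalgebra R K) : extendI I T ≤ 1 :=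
  Submodule.span_le.mpr fun _ ⟨r, _, hr⟩ =>
    (Subalgebra.mem_one_submodule_iff T).mpr (hr ▸ T.algebraMap_mem r)

end NagataTransform

section Statements

variable {R : Type*} [CommRing R] [IsDomain R]
variable {K : Type*} [Field K] [Algebra R K] [IsFractionRing R K]

theorem statement_18_general (I : Ideal R)
    (hinv : IsTInvertible K I) :
    tOp (extendI I (nagata K I)) = 1 := by
  obtain ⟨s, hsI, hs0, hs⟩ := exists_finset_one_div_le_dual hinv
  set F := Submodule.span (nagata K I) (s : Set K)
  have hF0 : F ≠ ⊥ := by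
    rw [Ne, Submodule.span_eq_bot] at hs0 ⊢
    exact hs0
  have hFI : F ≤ extendI I (nagata K I) := Submodule.span_mono (hsI.trans (coe_toK I).subset)
  have hFv : 1 ≤ vOp F := one_le_vOp_iff.mpr (one_div_span_le_one_of_one_div_le_dual hs)
  exact le_antisymm (tOp_le_one (extendI_le_one I _))
    (one_le_tOp hF0 (Submodule.fg_span s.finite_toSet) hFI hFv)

/-- Let `R` be a PVMD and `I` a `t`-invertible ideal of `R`. Then
`(I · T(I))_{t₁} = T(I)`, where `t₁` is the `t`-operation of the Nagata transform
`T(I)`. -/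
theorem statement_18 (hR : IsPVMD R K) (I : Ideal R) (hbot : I ≠ ⊥)
    (hinv : IsTInvertible K I) :
    tOp (extendI I (nagata K I)) = 1 :=
  statement_18_general I hinv

end Statements

end

end PVMDPaper
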